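/- Let a ∈ ℝⁿ and B ⊆ ℝⁿ, and let M = {Sym(abᵀ) : b ∈ B} where Sym(N) = (N + Nᵀ)/2. Then for every positive semidefinite X of rank at least two, range(X) ∩ {x : xᵀMx = 0 ∀M ∈ M} ≠ {0}; consequently S(M) is rank-one generated. -/

import Mathlib

/-!
For `x ⊥ a` every `Sym(a bᵀ)` is isotropic at `x`, since `xᵀ Sym(a bᵀ) x = (aᵀx)(bᵀx)`, and the
hyperplane `a⊥` meets `range X` nontrivially as soon as `rank X ≥ 2`.

For rank-one generation, peel off rank-one pieces: if `x = X y ≠ 0`, then Cauchy–Schwarz for the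
semi-inner product of `X` shows that `X - xxᵀ / (yᵀx)` is still positive semidefinite, and its
kernel gains `y`, so its rank drops. Choosing `x` isotropic for all of `𝓜` (or arbitrary when
`rank X = 1`, where the remainder vanishes) keeps both pieces in `S(𝓜)`; induction on the rank
writes `X` as a sum, hence a convex combination of scaled copies, of rank-one members of `S(𝓜)`.
-/

open Matrix Set

noncomputable section

/-- The set of rank-one (outer product) matrices `x xᵀ`. -/
def RankOneSet (n : ℕ) : Set (Matrix (Fin n) (Fin n) ℝ) :=
  {X | ∃ x : Fin n → ℝ, X = vecMulVec x x}

/-- A set of PSD matrices is rank-one generated if it equals the convex hull of its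
rank-one members. -/
def IsROG {n : ℕ} (S : Set (Matrix (Fin n) (Fin n) ℝ)) : Prop :=
  S = convexHull ℝ (S ∩ RankOneSet n)

/-- `ℝ₊X` is an extreme ray of `S`: `X ∈ S`, `X ≠ 0`, and whenever `X = (Y+Z)/2` with
`Y, Z ∈ S`, both `Y` and `Z` lie on the ray `ℝ₊X`. -/
def IsExtremeRay' {n : ℕ} (S : Set (Matrix (Fin n) (Fin n) ℝ))
    (X : Matrix (Fin n) (Fin n) ℝ) : Prop :=
  X ∈ S ∧ X ≠ 0 ∧ ∀ Y ∈ S, ∀ Z ∈ S, X = (1/2 : ℝ) • (Y + Z) →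
    (∃ α : ℝ, 0 ≤ α ∧ Y = α • X) ∧ (∃ β : ℝ, 0 ≤ β ∧ Z = β • X)

/-- `S(𝓜) = {X ⪰ 0 : ⟨N, X⟩ ≥ 0 ∀ N ∈ 𝓜}` with the trace inner product. -/
def SCone {n : ℕ} (𝓜 : Set (Matrix (Fin n) (Fin n) ℝ)) : Set (Matrix (Fin n) (Fin n) ℝ) :=
  {X | X.PosSemidef ∧ ∀ N ∈ 𝓜, 0 ≤ (N * X).trace}

/-- `T(𝓜) = {X ⪰ 0 : ⟨N, X⟩ = 0 ∀ N ∈ 𝓜}` with the trace inner product. -/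
def TCone {n : ℕ} (𝓜 : Set (Matrix (Fin n) (Fin n) ℝ)) : Set (Matrix (Fin n) (Fin n) ℝ) :=
  {X | X.PosSemidef ∧ ∀ N ∈ 𝓜, (N * X).trace = 0}

theorem add_mem_convexHull_of_smul_mem {𝕜 E : Type*} [Field 𝕜] [LinearOrder 𝕜]
    [IsStrictOrderedRing 𝕜] [AddCommGroup E] [Module 𝕜 E] {s : Set E}
    (hs : ∀ c : 𝕜, 0 ≤ c → ∀ z ∈ s, c • z ∈ s) {x y : E}
    (hx : x ∈ convexHull 𝕜 s) (hy : y ∈ convexHull 𝕜 s) : x + y ∈ convexHull 𝕜 s := by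
  have hsmul : ∀ z ∈ convexHull 𝕜 s, (2 : 𝕜) • z ∈ convexHull 𝕜 s := fun z hz =>
    convexHull_mono (Set.smul_set_subset_iff.2 fun w hw => hs 2 zero_le_two w hw)
      (convexHull_smul (2 : 𝕜) s ▸ Set.smul_mem_smul_set hz)
  convert convex_convexHull 𝕜 s (hsmul x hx) (hsmul y hy) (by norm_num : (0 : 𝕜) ≤ 1 / 2)
    (by norm_num : (0 : 𝕜) ≤ 1 / 2) (by norm_num) using 1
  module

namespace Matrix

section Rank

variable {m n K : Type*} [Fintype n] [Field K]

theorem rank_eq_zero_iff {A : Matrix m n K} : A.rank = 0 ↔ A = 0 := by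
  classical
  rw [rank, Submodule.finrank_eq_zero, LinearMap.range_eq_bot, ← toLin'_apply',
    LinearEquiv.map_eq_zero_iff]

theorem rank_lt_rank_of_ker_mulVecLin_lt [Finite m] {A B : Matrix m n K}
    (h : LinearMap.ker A.mulVecLin < LinearMap.ker B.mulVecLin) : B.rank < A.rank := by
  have hA := LinearMap.finrank_range_add_finrank_ker A.mulVecLin
  have hB := LinearMap.finrank_range_add_finrank_ker B.mulVecLin
  have := Submodule.finrank_lt_finrank_of_lt h
  unfold rank
  omega

theorem exists_ne_zero_mulVec_eq_of_rank_ne_zero {A : Matrix m n K} (h : A.rank ≠ 0) :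
    ∃ x ≠ 0, ∃ y, A *ᵥ y = x := by
  obtain ⟨_, ⟨y, rfl⟩, hx⟩ :=
    Submodule.exists_mem_ne_zero_of_ne_bot (mt Submodule.finrank_eq_zero.mpr h)
  exact ⟨_, hx, y, rfl⟩

theorem exists_ne_zero_mulVec_eq_dotProduct_eq_zero [Fintype m] {A : Matrix m n K}
    (h : 2 ≤ A.rank) (a : m → K) : ∃ x ≠ 0, (∃ y, A *ᵥ y = x) ∧ a ⬝ᵥ x = 0 := by
  let f : LinearMap.range A.mulVecLin →ₗ[K] K :=
    (dotProductBilin K K a).comp (LinearMap.range A.mulVecLin).subtype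
  have hker : LinearMap.ker f ≠ ⊥ :=
    LinearMap.ker_ne_bot_of_finrank_lt (by rw [Module.finrank_self]; exact h)
  obtain ⟨⟨_, y, rfl⟩, hx, hx0⟩ := Submodule.exists_mem_ne_zero_of_ne_bot hker
  exact ⟨A *ᵥ y, fun h => hx0 (Subtype.ext h), ⟨y, rfl⟩, hx⟩

end Rank

section VecMulVec

variable {n R : Type*} [Fintype n] [CommSemiring R]

theorem dotProduct_vecMulVec_mulVec (a b x : n → R) :
    x ⬝ᵥ vecMulVec a b *ᵥ x = (a ⬝ᵥ x) * (b ⬝ᵥ x) := by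
  rw [vecMulVec_mulVec, dotProduct_comm]
  simp [mul_comm]

theorem trace_mul_vecMulVec_self (N : Matrix n n R) (x : n → R) :
    (N * vecMulVec x x).trace = x ⬝ᵥ N *ᵥ x := by
  rw [mul_vecMulVec, trace_vecMulVec, dotProduct_comm]

end VecMulVec

theorem dotProduct_half_smul_vecMulVec_add_mulVec {n : Type*} [Fintype n] (a b x : n → ℝ) :
    x ⬝ᵥ ((1 / 2 : ℝ) • (vecMulVec a b + vecMulVec b a)) *ᵥ x = (a ⬝ᵥ x) * (b ⬝ᵥ x) := by
  rw [smul_mulVec, add_mulVec, dotProduct_smul, dotProduct_add, dotProduct_vecMulVec_mulVec,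
    dotProduct_vecMulVec_mulVec, smul_eq_mul]
  ring

namespace PosSemidef

variable {n : Type*} [Fintype n] {X : Matrix n n ℝ} {x y : n → ℝ}

theorem mulVec_dotProduct (hX : X.PosSemidef) (y z : n → ℝ) : X *ᵥ y ⬝ᵥ z = y ⬝ᵥ X *ᵥ z := by
  rw [dotProduct_comm, ← dotProduct_transpose_mulVec, (isHermitian_iff_isSymm.1 hX.1).eq]

theorem dotProduct_nonneg_of_mulVec_eq (hX : X.PosSemidef) (hxy : X *ᵥ y = x) : 0 ≤ y ⬝ᵥ x := by
  simpa [← hxy] using hX.dotProduct_mulVec_nonneg y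

/-- Cauchy–Schwarz for the semi-inner product `(u, v) ↦ uᵀ X v`, applied to `y` and `z`. -/
theorem sq_dotProduct_le (hX : X.PosSemidef) (hxy : X *ᵥ y = x) (z : n → ℝ) :
    (x ⬝ᵥ z) ^ 2 ≤ (y ⬝ᵥ x) * (z ⬝ᵥ X *ᵥ z) := by
  classical
  have hCS := LinearMap.BilinForm.apply_mul_apply_le_of_forall_zero_le (toLinearMap₂' ℝ X)
    (by simpa [toLinearMap₂'_apply'] using hX.dotProduct_mulVec_nonneg) y z
  simp only [toLinearMap₂'_apply'] at hCS
  rw [sq]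
  simpa only [← hX.mulVec_dotProduct, hxy, dotProduct_comm z x] using hCS

theorem sub_smul_vecMulVec (hX : X.PosSemidef) (hxy : X *ᵥ y = x) :
    (X - (y ⬝ᵥ x)⁻¹ • vecMulVec x x).PosSemidef := by
  have hyx := hX.dotProduct_nonneg_of_mulVec_eq hxy
  refine .of_dotProduct_mulVec_nonneg
    (hX.1.sub ((posSemidef_vecMulVec_self_star x).smul (inv_nonneg.2 hyx)).1) fun z => ?_
  simp only [star_trivial, sub_mulVec, smul_mulVec, dotProduct_sub, dotProduct_smul,
    dotProduct_vecMulVec_mulVec, smul_eq_mul, sub_nonneg, ← sq]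
  rcases hyx.eq_or_lt with h | h
  · simpa [← h] using hX.dotProduct_mulVec_nonneg z
  · rw [inv_mul_le_iff₀ h]
    exact hX.sq_dotProduct_le hxy z

/-- `y` enters the kernel while the kernel of `X`, which is orthogonal to `x`, stays in it. -/
theorem rank_sub_smul_vecMulVec_lt (hX : X.PosSemidef) (hxy : X *ᵥ y = x) (hx : x ≠ 0) :
    (X - (y ⬝ᵥ x)⁻¹ • vecMulVec x x).rank < X.rank := by
  have hyx : y ⬝ᵥ x ≠ 0 := fun h =>
    hx (hxy ▸ (hX.dotProduct_mulVec_zero_iff y).1 (by simpa [hxy] using h))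
  refine rank_lt_rank_of_ker_mulVecLin_lt (lt_of_le_of_ne (fun z hz => ?_) fun h => ?_)
  · have hz : X *ᵥ z = 0 := hz
    have hxz : x ⬝ᵥ z = 0 := by rw [← hxy, hX.mulVec_dotProduct, hz, dotProduct_zero]
    simp [vecMulVec_mulVec, hxz, hz]
  · have hy : y ∈ LinearMap.ker (X - (y ⬝ᵥ x)⁻¹ • vecMulVec x x).mulVecLin := by
      simp [vecMulVec_mulVec, hxy, smul_smul, dotProduct_comm x y, hyx]
    exact hx (hxy ▸ (h ▸ hy : y ∈ LinearMap.ker X.mulVecLin))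

end PosSemidef

end Matrix

section Cone

variable {n : ℕ} {𝓜 : Set (Matrix (Fin n) (Fin n) ℝ)}

theorem zero_mem_sCone : (0 : Matrix (Fin n) (Fin n) ℝ) ∈ SCone 𝓜 :=
  ⟨PosSemidef.zero, by simp⟩

theorem smul_mem_sCone {X : Matrix (Fin n) (Fin n) ℝ} (hX : X ∈ SCone 𝓜) {c : ℝ} (hc : 0 ≤ c) :
    c • X ∈ SCone 𝓜 :=
  ⟨hX.1.smul hc, fun N hN => by
    rw [mul_smul_comm, trace_smul, smul_eq_mul]
    exact mul_nonneg hc (hX.2 N hN)⟩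

theorem convex_sCone (𝓜 : Set (Matrix (Fin n) (Fin n) ℝ)) : Convex ℝ (SCone 𝓜) :=
  fun X hX Y hY p q hp hq _ => by
    refine ⟨(hX.1.smul hp).add (hY.1.smul hq), fun N hN => ?_⟩
    rw [mul_add, trace_add]
    exact add_nonneg ((smul_mem_sCone hX hp).2 N hN) ((smul_mem_sCone hY hq).2 N hN)

theorem smul_vecMulVec_self_mem_rankOneSet (x : Fin n → ℝ) {c : ℝ} (hc : 0 ≤ c) :
    c • vecMulVec x x ∈ RankOneSet n :=
  ⟨√c • x, by rw [smul_vecMulVec, vecMulVec_smul, smul_smul, Real.mul_self_sqrt hc]⟩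

theorem smul_mem_rankOneSet {X : Matrix (Fin n) (Fin n) ℝ} (hX : X ∈ RankOneSet n) {c : ℝ}
    (hc : 0 ≤ c) : c • X ∈ RankOneSet n := by
  obtain ⟨x, rfl⟩ := hX
  exact smul_vecMulVec_self_mem_rankOneSet x hc

theorem exists_rankOne_sub_mem_sCone
    (h𝓜 : ∀ X : Matrix (Fin n) (Fin n) ℝ, X.PosSemidef → 2 ≤ X.rank →
      ∃ x ≠ 0, (∃ y, X *ᵥ y = x) ∧ ∀ N ∈ 𝓜, x ⬝ᵥ N *ᵥ x = 0)
    {X : Matrix (Fin n) (Fin n) ℝ} (hX : X ∈ SCone 𝓜) (hX0 : X ≠ 0) :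
    ∃ Z ∈ SCone 𝓜 ∩ RankOneSet n, X - Z ∈ SCone 𝓜 ∧ (X - Z).rank < X.rank := by
  have hr : X.rank ≠ 0 := mt Matrix.rank_eq_zero_iff.1 hX0
  rcases le_or_gt 2 X.rank with h2 | h1
  · obtain ⟨x, hx, ⟨y, hxy⟩, hxN⟩ := h𝓜 X hX.1 h2
    have hδ := inv_nonneg.2 (hX.1.dotProduct_nonneg_of_mulVec_eq hxy)
    have htr : ∀ N ∈ 𝓜, (N * ((y ⬝ᵥ x)⁻¹ • vecMulVec x x)).trace = 0 := fun N hN => by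
      rw [mul_smul_comm, trace_smul, trace_mul_vecMulVec_self, hxN N hN, smul_zero]
    refine ⟨(y ⬝ᵥ x)⁻¹ • vecMulVec x x,
      ⟨⟨(posSemidef_vecMulVec_self_star x).smul hδ, fun N hN => (htr N hN).ge⟩,
        smul_vecMulVec_self_mem_rankOneSet x hδ⟩,
      ⟨hX.1.sub_smul_vecMulVec hxy, fun N hN => ?_⟩, hX.1.rank_sub_smul_vecMulVec_lt hxy hx⟩
    rw [mul_sub, trace_sub, htr N hN, sub_zero]
    exact hX.2 N hN
  · obtain ⟨x, hx, y, hxy⟩ := exists_ne_zero_mulVec_eq_of_rank_ne_zero hr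
    have hX1 : X = (y ⬝ᵥ x)⁻¹ • vecMulVec x x := by
      rw [← sub_eq_zero, ← Matrix.rank_eq_zero_iff]
      have := hX.1.rank_sub_smul_vecMulVec_lt hxy hx
      omega
    refine ⟨X, ⟨hX, hX1 ▸ smul_vecMulVec_self_mem_rankOneSet x
      (inv_nonneg.2 (hX.1.dotProduct_nonneg_of_mulVec_eq hxy))⟩, ?_, ?_⟩
    · simpa using zero_mem_sCone
    · simpa using Nat.pos_of_ne_zero hr

theorem isROG_sCone
    (h𝓜 : ∀ X : Matrix (Fin n) (Fin n) ℝ, X.PosSemidef → 2 ≤ X.rank →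
      ∃ x ≠ 0, (∃ y, X *ᵥ y = x) ∧ ∀ N ∈ 𝓜, x ⬝ᵥ N *ᵥ x = 0) :
    IsROG (SCone 𝓜) := by
  refine Set.Subset.antisymm (fun X hX => ?_)
    (convexHull_min Set.inter_subset_left (convex_sCone 𝓜))
  induction hr : X.rank using Nat.strong_induction_on generalizing X with
  | _ r ih =>
    by_cases hX0 : X = 0
    · subst hX0
      exact subset_convexHull ℝ _ ⟨zero_mem_sCone, 0, by simp⟩
    obtain ⟨Z, hZ, hXZ, hlt⟩ := exists_rankOne_sub_mem_sCone h𝓜 hX hX0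
    have hsmul : ∀ c : ℝ, 0 ≤ c → ∀ W ∈ SCone 𝓜 ∩ RankOneSet n,
        c • W ∈ SCone 𝓜 ∩ RankOneSet n :=
      fun c hc W hW => ⟨smul_mem_sCone hW.1 hc, smul_mem_rankOneSet hW.2 hc⟩
    simpa using add_mem_convexHull_of_smul_mem hsmul (subset_convexHull ℝ _ hZ)
      (ih _ (hr ▸ hlt) (X - Z) hXZ rfl)

end Cone

theorem stmt_12 {n : ℕ} (a : Fin n → ℝ) (B : Set (Fin n → ℝ)) :
    (∀ X : Matrix (Fin n) (Fin n) ℝ, X.PosSemidef → 2 ≤ X.rank →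
      ∃ x : Fin n → ℝ, x ≠ 0 ∧ (∃ y : Fin n → ℝ, X.mulVec y = x) ∧
        ∀ N ∈ (fun b => (1/2 : ℝ) • (vecMulVec a b + vecMulVec b a)) '' B,
          x ⬝ᵥ N.mulVec x = 0) ∧
    IsROG (SCone ((fun b => (1/2 : ℝ) • (vecMulVec a b + vecMulVec b a)) '' B)) := by
  refine (fun hnull => ⟨hnull, isROG_sCone hnull⟩) fun X _ h2 => ?_
  obtain ⟨x, hx, hxX, hax⟩ := exists_ne_zero_mulVec_eq_dotProduct_eq_zero h2 a
  refine ⟨x, hx, hxX, ?_⟩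
  rintro _ ⟨b, -, rfl⟩
  rw [dotProduct_half_smul_vecMulVec_add_mulVec, hax, zero_mul]
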